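/- arXiv:2010.05888 — 2 statements merged into one kernel-verified Lean document; each statement's English description precedes it below -/
import Mathlib

section
/- For the coordinate-wise median of q real numbers with at most f Byzantine values and q ≥ 2f+1, the distance from the median to any correct value is at most the diameter of the correct values (the maximum pairwise distance among correct values). -/
/-!
With `k = (q - 1) / 2`, the median `m` is the `k`-th smallest value, so at least `k + 1 > f`
values are `≤ m` and at least `q - k > f` values are `≥ m`. Each of these two groups therefore
meets the `≥ q - f` correct indices, giving correct `a`, `b` with `x a ≤ m ≤ x b`; then
`m - x l ≤ x b - x l` and `x l - m ≤ x l - x a` are both bounded by the diameter.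
-/

/-- Lower median of a list of reals. -/
noncomputable def listMedian (l : List ℝ) : ℝ :=
  (l.mergeSort (· ≤ ·)).getD ((l.length - 1) / 2) 0

open Finset

namespace List

theorem countP_ofFn_eq_card_filter {α : Type*} {n : ℕ} (x : Fin n → α) (p : α → Prop)
    [DecidablePred p] : (ofFn x).countP (p ·) = #{i | p (x i)} := by
  rw [← Multiset.coe_countP, ← Fin.univ_val_map, Multiset.countP_map]
  rfl

variable {α : Type*} [LinearOrder α]

theorem SortedLE.succ_le_countP_le_getElem {L : List α} (hL : L.SortedLE) {k : ℕ}
    (hk : k < L.length) : k + 1 ≤ L.countP (· ≤ L[k]) :=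
  calc k + 1 = (L.take (k + 1)).countP (· ≤ L[k]) := by
        rw [countP_eq_length.2, length_take]
        · omega
        intro y hy
        obtain ⟨i, hi, rfl⟩ := getElem_of_mem hy
        simp only [length_take] at hi
        simpa [getElem_take] using
          sortedLE_iff_getElem_le_getElem_of_le.1 hL (by omega : i ≤ k)
    _ ≤ L.countP (· ≤ L[k]) := (take_sublist _ _).countP_le

theorem SortedLE.length_sub_le_countP_getElem_le {L : List α} (hL : L.SortedLE) {k : ℕ}
    (hk : k < L.length) : L.length - k ≤ L.countP (L[k] ≤ ·) :=
  calc L.length - k = (L.drop k).countP (L[k] ≤ ·) := by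
        rw [countP_eq_length.2, length_drop]
        intro y hy
        obtain ⟨i, hi, rfl⟩ := getElem_of_mem hy
        simpa [getElem_drop] using
          sortedLE_iff_getElem_le_getElem_of_le.1 hL (Nat.le_add_right k i)
    _ ≤ L.countP (L[k] ≤ ·) := (drop_sublist _ _).countP_le

end List

theorem listMedian_eq_getElem {l : List ℝ} (hl : l ≠ []) :
    listMedian l = (l.mergeSort (· ≤ ·))[(l.length - 1) / 2]'(by
      have := List.length_pos_iff.2 hl
      rw [List.length_mergeSort]; omega) := by
  rw [listMedian, List.getD_eq_getElem?_getD, List.getElem?_eq_getElem, Option.getD_some]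

theorem lt_countP_le_listMedian {l : List ℝ} (hl : l ≠ []) :
    (l.length - 1) / 2 < l.countP (· ≤ listMedian l) := by
  rw [listMedian_eq_getElem hl, ← (List.mergeSort_perm l _).countP_eq]
  simpa [List.length_mergeSort] using (List.sortedLE_mergeSort (l := l)).succ_le_countP_le_getElem _

theorem length_sub_le_countP_listMedian_le {l : List ℝ} (hl : l ≠ []) :
    l.length - (l.length - 1) / 2 ≤ l.countP (listMedian l ≤ ·) := by
  rw [listMedian_eq_getElem hl, ← (List.mergeSort_perm l _).countP_eq]
  simpa [List.length_mergeSort] using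
    (List.sortedLE_mergeSort (l := l)).length_sub_le_countP_getElem_le _

theorem Finset.inter_nonempty_of_lt_card_of_card_sub_le_card {α : Type*} [Fintype α]
    [DecidableEq α] {f : ℕ} {s t : Finset α} (hs : f < #s) (ht : Fintype.card α - f ≤ #t) :
    (s ∩ t).Nonempty :=
  inter_nonempty_of_card_lt_card_add_card (subset_univ s) (subset_univ t) (by
    rw [card_univ]; omega)

/-- for `q ≥ 2f+1` reals of which at most `f` are Byzantine
(correct index set `H`, `|H| ≥ q - f`), the distance from the median to any
correct value is at most the diameter (max pairwise distance) of correct values. -/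
theorem stmt1 (q f : ℕ) (x : Fin q → ℝ) (H : Finset (Fin q))
    (hq : q ≥ 2 * f + 1) (hH : H.card ≥ q - f) (hne : H.Nonempty)
    (l : Fin q) (hl : l ∈ H) :
    |listMedian (List.ofFn x) - x l| ≤
      (H ×ˢ H).sup' (hne.product hne) (fun p => |x p.1 - x p.2|) := by
  have hx : List.ofFn x ≠ [] := by simpa using (Fin.pos l).ne'
  have hle := lt_countP_le_listMedian hx
  have hge := length_sub_le_countP_listMedian_le hx
  rw [List.countP_ofFn_eq_card_filter, List.length_ofFn] at hle hge
  set m := listMedian (List.ofFn x)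
  obtain ⟨a, ha⟩ := inter_nonempty_of_lt_card_of_card_sub_le_card (t := H) (f := f)
    (by omega : f < #{i | x i ≤ m}) (by simpa using hH)
  obtain ⟨b, hb⟩ := inter_nonempty_of_lt_card_of_card_sub_le_card (t := H) (f := f)
    (by omega : f < #{i | m ≤ x i}) (by simpa using hH)
  simp only [mem_inter, mem_filter, mem_univ, true_and] at ha hb
  have hdiam {i j : Fin q} (hi : i ∈ H) (hj : j ∈ H) :
      |x i - x j| ≤ (H ×ˢ H).sup' (hne.product hne) (fun p => |x p.1 - x p.2|) :=
    le_sup' (fun p : Fin q × Fin q => |x p.1 - x p.2|) (mk_mem_product hi hj)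
  calc |m - x l| ≤ max (x b - x l) (x l - x a) := abs_sub_le_max_sub ha.1 hb.1 _
    _ ≤ _ := max_le ((le_abs_self _).trans (hdiam hb.2 hl))
        ((le_abs_self _).trans (hdiam hl ha.2))
end

section
/- MDA robustness bound: if MDA selects, among q vectors at most f of which are Byzantine (with q ≥ 2f+1), a subset S of size q−f minimizing the diameter max_{i,j∈S} ‖x_i − x_j‖ and outputs the average of S, then the distance from the MDA output to any correct vector is at most twice the diameter of the correct vectors. -/
/-- MDA robustness bound. If `S*` is a subset of size `q - f` of
minimum diameter among `q` vectors (at most `f` Byzantine, `q ≥ 2f+1`, correct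
index set `H` with `|H| = q - f`), then the average of `S*` is within twice the
diameter of the correct vectors from any correct vector. -/
theorem stmt2 (q d f : ℕ) (x : Fin q → EuclideanSpace ℝ (Fin d))
    (H Sstar : Finset (Fin q))
    (hq : q ≥ 2 * f + 1) (hH : H.card = q - f) (hS : Sstar.card = q - f)
    (hmin : ∀ S : Finset (Fin q), S.card = q - f →
      Metric.diam (x '' ↑Sstar) ≤ Metric.diam (x '' ↑S))
    (l : Fin q) (hl : l ∈ H) :
    ‖((q - f : ℕ) : ℝ)⁻¹ • (∑ i ∈ Sstar, x i) - x l‖ ≤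
      2 * Metric.diam (x '' ↑H) := by
  have hn : 0 < q - f := by omega
  -- intersect Sstar and H
  have hcard : (Sstar ∪ H).card ≤ q := by
    simpa using Finset.card_le_card (Finset.subset_univ (Sstar ∪ H))
  have hinter : (Sstar ∩ H).Nonempty := by
    rw [Finset.nonempty_iff_ne_empty]
    intro h
    have := Finset.card_union_add_card_inter Sstar H
    rw [h] at this
    simp [hH, hS] at this
    omega
  obtain ⟨j, hj⟩ := hinter
  rw [Finset.mem_inter] at hj
  have hbH : Bornology.IsBounded (x '' ↑H) := (H.finite_toSet.image x).isBounded
  have hbS : Bornology.IsBounded (x '' ↑Sstar) := (Sstar.finite_toSet.image x).isBounded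
  have hdS : Metric.diam (x '' ↑Sstar) ≤ Metric.diam (x '' ↑H) := hmin H hH
  have key : ∀ i ∈ Sstar, ‖x i - x l‖ ≤ 2 * Metric.diam (x '' ↑H) := by
    intro i hi
    have h1 : dist (x i) (x j) ≤ Metric.diam (x '' ↑Sstar) :=
      Metric.dist_le_diam_of_mem hbS ⟨i, hi, rfl⟩ ⟨j, hj.1, rfl⟩
    have h2 : dist (x j) (x l) ≤ Metric.diam (x '' ↑H) :=
      Metric.dist_le_diam_of_mem hbH ⟨j, hj.2, rfl⟩ ⟨l, hl, rfl⟩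
    have h3 : dist (x i) (x l) ≤ dist (x i) (x j) + dist (x j) (x l) :=
      dist_triangle _ _ _
    have := dist_eq_norm (x i) (x l)
    rw [← this]
    linarith
  have hrw : ((q - f : ℕ) : ℝ)⁻¹ • (∑ i ∈ Sstar, x i) - x l
      = ((q - f : ℕ) : ℝ)⁻¹ • (∑ i ∈ Sstar, (x i - x l)) := by
    rw [Finset.sum_sub_distrib, smul_sub]
    congr 1
    rw [Finset.sum_const, hS, ← Nat.cast_smul_eq_nsmul ℝ, smul_smul,
      inv_mul_cancel₀ (by positivity : ((q - f : ℕ) : ℝ) ≠ 0), one_smul]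
  rw [hrw, norm_smul, norm_inv, Real.norm_natCast]
  have hsum : ‖∑ i ∈ Sstar, (x i - x l)‖ ≤ (Sstar.card : ℝ) * (2 * Metric.diam (x '' ↑H)) := by
    calc ‖∑ i ∈ Sstar, (x i - x l)‖ ≤ ∑ i ∈ Sstar, ‖x i - x l‖ := norm_sum_le _ _
    _ ≤ ∑ _i ∈ Sstar, 2 * Metric.diam (x '' ↑H) := Finset.sum_le_sum key
    _ = (Sstar.card : ℝ) * (2 * Metric.diam (x '' ↑H)) := by
        rw [Finset.sum_const, nsmul_eq_mul]
  rw [hS] at hsum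
  have hpos : (0:ℝ) < ((q - f : ℕ) : ℝ) := by positivity
  calc (((q - f : ℕ) : ℝ))⁻¹ * ‖∑ i ∈ Sstar, (x i - x l)‖
      ≤ (((q - f : ℕ) : ℝ))⁻¹ * (((q - f : ℕ) : ℝ) * (2 * Metric.diam (x '' ↑H))) := by
        apply mul_le_mul_of_nonneg_left hsum (by positivity)
    _ = 2 * Metric.diam (x '' ↑H) := by field_simp
end
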